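/- Define H(σ) := (1/2)√(9σ² − 18σ + 25) + (3/2)σ − 5/2 and the shock speed s(σ) := (1 + 3σ)·√(H(σ)/(1 + 6H(σ) + H(σ)²)). Then s is continuous and strictly increasing on [0,1], with s(0) = 0 and s(1) = √2. -/
import Mathlib


/-- `H(σ) := (1/2)√(9σ² − 18σ + 25) + (3/2)σ − 5/2`, relating the FRW sound-speed
parameter σ to the TOV sound-speed parameter σ̄ = H(σ). -/
noncomputable def Hfun (σ : ℝ) : ℝ :=
  (1 / 2) * Real.sqrt (9 * σ ^ 2 - 18 * σ + 25) + (3 / 2) * σ - 5 / 2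

/-- The shock speed `s(σ) := (1 + 3σ)√(H(σ)/(1 + 6H(σ) + H(σ)²))` in a locally
Minkowskian frame comoving with the FRW fluid. -/
noncomputable def sfun (σ : ℝ) : ℝ :=
  (1 + 3 * σ) * Real.sqrt (Hfun σ / (1 + 6 * Hfun σ + Hfun σ ^ 2))

lemma qnonneg (σ : ℝ) : 0 ≤ 9 * σ ^ 2 - 18 * σ + 25 := by nlinarith [sq_nonneg (σ - 1)]

lemma sqrt_gt (σ : ℝ) : 3 - 3 * σ < Real.sqrt (9 * σ ^ 2 - 18 * σ + 25) := by
  have h := Real.sq_sqrt (qnonneg σ)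
  have h0 := Real.sqrt_nonneg (9 * σ ^ 2 - 18 * σ + 25)
  nlinarith [sq_nonneg (Real.sqrt (9 * σ ^ 2 - 18 * σ + 25) - (3 - 3 * σ))]

lemma Hmono : StrictMonoOn Hfun (Set.Icc 0 1) := by
  intro x hx y hy hxy
  set a := Real.sqrt (9 * x ^ 2 - 18 * x + 25) with ha
  set b := Real.sqrt (9 * y ^ 2 - 18 * y + 25) with hb
  have ha2 : a ^ 2 = 9 * x ^ 2 - 18 * x + 25 := Real.sq_sqrt (qnonneg x)
  have hb2 : b ^ 2 = 9 * y ^ 2 - 18 * y + 25 := Real.sq_sqrt (qnonneg y)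
  have hag : 3 - 3 * x < a := sqrt_gt x
  have hbg : 3 - 3 * y < b := sqrt_gt y
  have hx1 : x ≤ 1 := hx.2
  have hy1 : y ≤ 1 := hy.2
  have habpos : 0 < a + b := by nlinarith
  simp only [Hfun, ← ha, ← hb]
  nlinarith [mul_pos (sub_pos.mpr hxy) habpos, sq_nonneg (a - b)]

lemma Hzero : Hfun 0 = 0 := by
  have h : Real.sqrt 25 = 5 := by
    rw [show (25:ℝ) = 5 ^ 2 by norm_num, Real.sqrt_sq (by norm_num)]
  unfold Hfun; norm_num [h]

lemma Hone : Hfun 1 = 1 := by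
  have h : Real.sqrt 16 = 4 := by
    rw [show (16:ℝ) = 4 ^ 2 by norm_num, Real.sqrt_sq (by norm_num)]
  unfold Hfun; norm_num [h]

lemma Hrange {σ : ℝ} (h : σ ∈ Set.Icc (0:ℝ) 1) : 0 ≤ Hfun σ ∧ Hfun σ ≤ 1 := by
  obtain ⟨h0, h1⟩ := h
  have hs := Real.sq_sqrt (qnonneg σ)
  have hn := Real.sqrt_nonneg (9 * σ ^ 2 - 18 * σ + 25)
  constructor
  · have : 5 - 3 * σ ≤ Real.sqrt (9 * σ ^ 2 - 18 * σ + 25) := by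
      nlinarith [sq_nonneg (Real.sqrt (9 * σ ^ 2 - 18 * σ + 25) - (5 - 3 * σ))]
    simp only [Hfun]; linarith
  · have : Real.sqrt (9 * σ ^ 2 - 18 * σ + 25) ≤ 7 - 3 * σ := by
      exact Real.sqrt_le_iff.mpr ⟨by linarith, by nlinarith⟩
    simp only [Hfun]; linarith

lemma denom_pos {t : ℝ} (h : 0 ≤ t) : 0 < 1 + 6 * t + t ^ 2 := by nlinarith


/-- the shock speed `s` is continuous and strictly increasing on `[0,1]`,
with `s(0) = 0` and `s(1) = √2`. -/
theorem stmt_12 :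
    ContinuousOn sfun (Set.Icc 0 1) ∧ StrictMonoOn sfun (Set.Icc 0 1) ∧
    sfun 0 = 0 ∧ sfun 1 = Real.sqrt 2 := by
  have hHcont : Continuous Hfun := by
    unfold Hfun
    exact (((continuous_const.mul (Real.continuous_sqrt.comp (by continuity))).add
      (continuous_const.mul continuous_id)).sub continuous_const)
  refine ⟨?_, ?_, ?_, ?_⟩
  · apply ContinuousOn.mul (by fun_prop)
    apply Real.continuous_sqrt.comp_continuousOn
    apply ContinuousOn.div hHcont.continuousOn (by fun_prop)
    intro x hx
    exact ne_of_gt (denom_pos (Hrange hx).1)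
  · intro x hx y hy hxy
    have hHx := Hrange hx
    have hHy := Hrange hy
    have hlt : Hfun x < Hfun y := Hmono hx hy hxy
    have hdx := denom_pos hHx.1
    have hdy := denom_pos hHy.1
    have hfrac : Hfun x / (1 + 6 * Hfun x + Hfun x ^ 2) <
        Hfun y / (1 + 6 * Hfun y + Hfun y ^ 2) := by
      rw [div_lt_div_iff₀ hdx hdy]
      have hprod : Hfun x * Hfun y < 1 := by
        calc Hfun x * Hfun y ≤ Hfun x * 1 := by
              exact mul_le_mul_of_nonneg_left hHy.2 hHx.1
          _ = Hfun x := mul_one _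
          _ < Hfun y := hlt
          _ ≤ 1 := hHy.2
      nlinarith
    have hsq : Real.sqrt (Hfun x / (1 + 6 * Hfun x + Hfun x ^ 2)) <
        Real.sqrt (Hfun y / (1 + 6 * Hfun y + Hfun y ^ 2)) :=
      Real.sqrt_lt_sqrt (div_nonneg hHx.1 hdx.le) hfrac
    have h1 : (0:ℝ) < 1 + 3 * x := by linarith [hx.1]
    have h2 : (1:ℝ) + 3 * x < 1 + 3 * y := by linarith
    unfold sfun
    exact mul_lt_mul'' h2 hsq h1.le (Real.sqrt_nonneg _)
  · simp [sfun, Hzero]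
  · simp only [sfun, Hone]
    norm_num
    have h8 : Real.sqrt 8 = 2 * Real.sqrt 2 := by
      rw [show (8:ℝ) = (2 * Real.sqrt 2) ^ 2 by
        nlinarith [Real.sq_sqrt (show (0:ℝ) ≤ 2 by norm_num)]]
      exact Real.sqrt_sq (by positivity)
    have h2 : Real.sqrt 2 ≠ 0 := by positivity
    rw [h8]
    field_simp
    nlinarith [Real.sq_sqrt (show (0:ℝ) ≤ 2 by norm_num)]
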